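/- arXiv:1101.3081 — 7 statements merged into one kernel-verified Lean document; each statement's English description precedes it below -/
import Mathlib

section
/- If A = (μ_A, ν_A) is an intuitionistic fuzzy ideal of the right operator semigroup R, then A* = (μ_A*, ν_A*) is an intuitionistic fuzzy ideal of S. -/
/-- An intuitionistic fuzzy ideal of a Γ-semigroup with multiplication `m`. -/
def IFIdealGamma {S Γ : Type*} (m : S → Γ → S → S) (μ ν : S → ℝ) : Prop :=
  (∀ x, 0 ≤ μ x) ∧ (∀ x, 0 ≤ ν x) ∧ (∀ x, μ x + ν x ≤ 1) ∧
  (∀ (x : S) (γ : Γ) (y : S), max (μ x) (μ y) ≤ μ (m x γ y)) ∧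
  (∀ (x : S) (γ : Γ) (y : S), ν (m x γ y) ≤ min (ν x) (ν y))

/-- An intuitionistic fuzzy ideal of a semigroup. -/
def IFIdealSG {R : Type*} [Mul R] (μ ν : R → ℝ) : Prop :=
  (∀ u, 0 ≤ μ u) ∧ (∀ u, 0 ≤ ν u) ∧ (∀ u, μ u + ν u ≤ 1) ∧
  (∀ u v : R, max (μ u) (μ v) ≤ μ (u * v)) ∧
  (∀ u v : R, ν (u * v) ≤ min (ν u) (ν v))

/-- If A = (μ',ν') is an intuitionistic fuzzy ideal of the right operator
semigroup R of a Γ-semigroup S with unities, then A* = (μ'*, ν'*) with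
μ'*(a) = inf_γ μ'([γ,a]), ν'*(a) = sup_γ ν'([γ,a]) is an intuitionistic fuzzy ideal of S. -/
theorem stmt_4 (S Γ : Type*) [Nonempty S] [Nonempty Γ]
    (m : S → Γ → S → S) (g : Γ → S → Γ → Γ)
    (hm : ∀ (a : S) (α : Γ) (b : S) (β : Γ) (c : S), m (m a α b) β c = m a α (m b β c))
    (hmg : ∀ (a : S) (α : Γ) (b : S) (β : Γ) (c : S), m a (g α b β) c = m (m a α b) β c)
    (hgm : ∀ (α : Γ) (a : S) (β : Γ) (b : S) (γ : Γ), g α (m a β b) γ = g (g α a β) b γ)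
    (hgg : ∀ (α : Γ) (a : S) (β : Γ) (b : S) (γ : Γ), g α a (g β b γ) = g (g α a β) b γ)
    -- S has a left unity [e,δ] and a right unity [γ₀,f]
    (e : S) (δ : Γ) (hlu : ∀ s, m e δ s = s) (hluΓ : ∀ γ, g γ e δ = γ)
    (γ₀ : Γ) (f : S) (hru : ∀ s, m s γ₀ f = s) (hruΓ : ∀ α, g γ₀ f α = α)
    -- the right operator semigroup R
    (R : Type*) [Mul R] (mk : Γ → S → R)
    (hsurj : ∀ u : R, ∃ (α : Γ) (a : S), u = mk α a)
    (hmkeq : ∀ (α : Γ) (a : S) (β : Γ) (b : S), mk α a = mk β b ↔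
      ((∀ s : S, m s α a = m s β b) ∧ (∀ γ : Γ, g α a γ = g β b γ)))
    (hmul : ∀ (α : Γ) (a : S) (β : Γ) (b : S), mk α a * mk β b = mk (g α a β) b)
    (μ' ν' : R → ℝ) (hA : IFIdealSG μ' ν') :
    IFIdealGamma m (fun a => ⨅ γ : Γ, μ' (mk γ a)) (fun a => ⨆ γ : Γ, ν' (mk γ a)) := by
  obtain ⟨hμ0, hν0, hsum, hμm, hνm⟩ := hA
  have hμ1 : ∀ u, μ' u ≤ 1 := fun u => by have := hsum u; have := hν0 u; linarith
  have hν1 : ∀ u, ν' u ≤ 1 := fun u => by have := hsum u; have := hμ0 u; linarith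
  have hbb : ∀ a : S, BddBelow (Set.range fun γ : Γ => μ' (mk γ a)) := fun a =>
    ⟨0, by rintro _ ⟨γ, rfl⟩; exact hμ0 _⟩
  have hba : ∀ a : S, BddAbove (Set.range fun γ : Γ => ν' (mk γ a)) := fun a =>
    ⟨1, by rintro _ ⟨γ, rfl⟩; exact hν1 _⟩
  have hkey : ∀ (γ' : Γ) (x : S) (γ : Γ) (y : S),
      mk γ' (m x γ y) = mk γ' x * mk γ y := by
    intro γ' x γ y
    rw [hmul]
    exact (hmkeq _ _ _ _).mpr ⟨fun s => by rw [hmg, hm], fun γ'' => hgm γ' x γ y γ''⟩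
  refine ⟨fun a => le_ciInf fun γ => hμ0 _, fun a => ?_, fun a => ?_, ?_, ?_⟩
  · exact le_trans (hν0 (mk Classical.ofNonempty a)) (le_ciSup (hba a) _)
  · have h1 : (⨆ γ : Γ, ν' (mk γ a)) ≤ 1 - ⨅ γ : Γ, μ' (mk γ a) := by
      apply ciSup_le
      intro γ
      have := hsum (mk γ a)
      have := ciInf_le (hbb a) γ
      linarith
    linarith
  · intro x γ y
    apply le_ciInf
    intro γ'
    rw [hkey]
    exact le_trans (max_le_max (ciInf_le (hbb x) γ') (ciInf_le (hbb y) γ)) (hμm _ _)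
  · intro x γ y
    apply ciSup_le
    intro γ'
    rw [hkey]
    exact le_trans (hνm _ _)
      (min_le_min (le_ciSup (hba x) γ') (le_ciSup (hba y) γ))
end

section
/- If B = (μ_B, ν_B) is an intuitionistic fuzzy ideal of S, then B*′ = (μ_B*′, ν_B*′) is an intuitionistic fuzzy ideal of the right operator semigroup R. -/
/-- If B = (μ,ν) is an intuitionistic fuzzy ideal of a Γ-semigroup S with
unities, then B*′ = (μ*′, ν*′), with μ*′([α,a]) = inf_s μ(sαa), ν*′([α,a]) = sup_s ν(sαa),
is an intuitionistic fuzzy ideal of the right operator semigroup R. -/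
theorem stmt_5 (S Γ : Type*) [Nonempty S] [Nonempty Γ]
    (m : S → Γ → S → S) (g : Γ → S → Γ → Γ)
    (hm : ∀ (a : S) (α : Γ) (b : S) (β : Γ) (c : S), m (m a α b) β c = m a α (m b β c))
    (hmg : ∀ (a : S) (α : Γ) (b : S) (β : Γ) (c : S), m a (g α b β) c = m (m a α b) β c)
    (hgm : ∀ (α : Γ) (a : S) (β : Γ) (b : S) (γ : Γ), g α (m a β b) γ = g (g α a β) b γ)
    (hgg : ∀ (α : Γ) (a : S) (β : Γ) (b : S) (γ : Γ), g α a (g β b γ) = g (g α a β) b γ)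
    (e : S) (δ : Γ) (hlu : ∀ s, m e δ s = s) (hluΓ : ∀ γ, g γ e δ = γ)
    (γ₀ : Γ) (f : S) (hru : ∀ s, m s γ₀ f = s) (hruΓ : ∀ α, g γ₀ f α = α)
    (R : Type*) [Mul R] (mk : Γ → S → R)
    (hsurj : ∀ u : R, ∃ (α : Γ) (a : S), u = mk α a)
    (hmkeq : ∀ (α : Γ) (a : S) (β : Γ) (b : S), mk α a = mk β b ↔
      ((∀ s : S, m s α a = m s β b) ∧ (∀ γ : Γ, g α a γ = g β b γ)))
    (hmul : ∀ (α : Γ) (a : S) (β : Γ) (b : S), mk α a * mk β b = mk (g α a β) b)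
    (μ ν : S → ℝ) (hB : IFIdealGamma m μ ν)
    (μ' ν' : R → ℝ)
    (hμ' : ∀ (α : Γ) (a : S), μ' (mk α a) = ⨅ s : S, μ (m s α a))
    (hν' : ∀ (α : Γ) (a : S), ν' (mk α a) = ⨆ s : S, ν (m s α a)) :
    IFIdealSG μ' ν' := by
  obtain ⟨hμ0, hν0, hsum, hμm, hνm⟩ := hB
  have hν1 : ∀ x, ν x ≤ 1 := fun x => by have := hsum x; have := hμ0 x; linarith
  have hbb : ∀ (α : Γ) (a : S), BddBelow (Set.range fun s => μ (m s α a)) :=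
    fun α a => ⟨0, by rintro _ ⟨s, rfl⟩; exact hμ0 _⟩
  have hba : ∀ (α : Γ) (a : S), BddAbove (Set.range fun s => ν (m s α a)) :=
    fun α a => ⟨1, by rintro _ ⟨s, rfl⟩; exact hν1 _⟩
  refine ⟨?_, ?_, ?_, ?_, ?_⟩
  · intro u; obtain ⟨α, a, rfl⟩ := hsurj u
    rw [hμ']
    exact le_ciInf fun s => hμ0 _
  · intro u; obtain ⟨α, a, rfl⟩ := hsurj u
    rw [hν']
    exact le_trans (hν0 _) (le_ciSup (hba α a) (Classical.arbitrary S))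
  · intro u; obtain ⟨α, a, rfl⟩ := hsurj u
    rw [hμ', hν']
    have h1 : (⨆ s, ν (m s α a)) ≤ 1 - ⨅ s, μ (m s α a) := by
      apply ciSup_le
      intro s
      have h2 : (⨅ t, μ (m t α a)) ≤ μ (m s α a) := ciInf_le (hbb α a) s
      have := hsum (m s α a)
      linarith
    linarith
  · intro u v
    obtain ⟨α, a, rfl⟩ := hsurj u
    obtain ⟨β, b, rfl⟩ := hsurj v
    rw [hmul, hμ', hμ', hμ']
    apply le_ciInf
    intro s
    rw [hmg]
    refine max_le ?_ ?_
    · calc (⨅ t, μ (m t α a)) ≤ μ (m s α a) := ciInf_le (hbb α a) s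
        _ ≤ μ (m (m s α a) β b) := le_trans (le_max_left _ _) (hμm _ _ _)
    · exact ciInf_le (hbb β b) (m s α a)
  · intro u v
    obtain ⟨α, a, rfl⟩ := hsurj u
    obtain ⟨β, b, rfl⟩ := hsurj v
    rw [hmul, hν', hν', hν']
    apply ciSup_le
    intro s
    rw [hmg]
    refine le_min ?_ ?_
    · calc ν (m (m s α a) β b) ≤ min (ν (m s α a)) (ν b) := hνm _ _ _
        _ ≤ ν (m s α a) := min_le_left _ _
        _ ≤ ⨆ t, ν (m t α a) := le_ciSup (hba α a) s
    · exact le_ciSup (hba β b) (m s α a)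
end

section
/- For every intuitionistic fuzzy ideal A of S, (A^{+′})^+ = A, where the maps are defined via the left operator semigroup L; that is, for all x ∈ S, inf_{γ∈Γ} inf_{s∈S} μ_A(xγs) = μ_A(x) and sup_{γ∈Γ} sup_{s∈S} ν_A(xγs) = ν_A(x). -/
/-- For every intuitionistic fuzzy ideal A of a Γ-semigroup S possessing a
right unity [γ₀,f], (A^{+′})^+ = A; that is, for all x ∈ S,
inf_γ inf_s μ(xγs) = μ(x) and sup_γ sup_s ν(xγs) = ν(x). -/
theorem stmt_6 (S Γ : Type*) [Nonempty S] [Nonempty Γ]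
    (m : S → Γ → S → S)
    (hm : ∀ (a : S) (α : Γ) (b : S) (β : Γ) (c : S), m (m a α b) β c = m a α (m b β c))
    (γ₀ : Γ) (f : S) (hru : ∀ x, m x γ₀ f = x)
    (μ ν : S → ℝ) (hA : IFIdealGamma m μ ν) :
    ∀ x : S, (⨅ γ : Γ, ⨅ s : S, μ (m x γ s)) = μ x ∧
      (⨆ γ : Γ, ⨆ s : S, ν (m x γ s)) = ν x := by
  obtain ⟨hμ0, hν0, hsum, hμi, hνi⟩ := hA
  intro x
  have hμle : ∀ γ s, μ x ≤ μ (m x γ s) := fun γ s =>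
    le_trans (le_max_left _ _) (hμi x γ s)
  have hνle : ∀ γ s, ν (m x γ s) ≤ ν x := fun γ s =>
    le_trans (hνi x γ s) (min_le_left _ _)
  constructor
  · apply le_antisymm
    · have h1 : (⨅ γ : Γ, ⨅ s : S, μ (m x γ s)) ≤ ⨅ s : S, μ (m x γ₀ s) := by
        apply ciInf_le
        refine ⟨μ x, ?_⟩
        rintro y ⟨γ, rfl⟩
        exact le_ciInf fun s => hμle γ s
      have h2 : (⨅ s : S, μ (m x γ₀ s)) ≤ μ (m x γ₀ f) := by
        apply ciInf_le
        exact ⟨μ x, by rintro y ⟨s, rfl⟩; exact hμle γ₀ s⟩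
      calc _ ≤ _ := h1
        _ ≤ _ := h2
        _ = μ x := by rw [hru]
    · exact le_ciInf fun γ => le_ciInf fun s => hμle γ s
  · apply le_antisymm
    · exact ciSup_le fun γ => ciSup_le fun s => hνle γ s
    · have h2 : ν (m x γ₀ f) ≤ ⨆ s : S, ν (m x γ₀ s) := by
        apply le_ciSup (f := fun s => ν (m x γ₀ s))
        exact ⟨ν x, by rintro y ⟨s, rfl⟩; exact hνle γ₀ s⟩
      have h1 : (⨆ s : S, ν (m x γ₀ s)) ≤ ⨆ γ : Γ, ⨆ s : S, ν (m x γ s) := by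
        apply le_ciSup (f := fun γ => ⨆ s : S, ν (m x γ s))
        refine ⟨ν x, ?_⟩
        rintro y ⟨γ, rfl⟩
        exact ciSup_le fun s => hνle γ s
      calc ν x = ν (m x γ₀ f) := by rw [hru]
        _ ≤ _ := h2
        _ ≤ _ := h1
end

section
/- The map B ↦ B*′ is an inclusion preserving bijection between the set of all intuitionistic fuzzy ideals of S and the set of all intuitionistic fuzzy ideals of the right operator semigroup R, with inverse A ↦ A*. -/
private lemma bddB {ι : Type*} {f : ι → ℝ} (h : ∀ i, 0 ≤ f i) : BddBelow (Set.range f) :=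
  ⟨0, by rintro _ ⟨i, rfl⟩; exact h i⟩

private lemma bddA {ι : Type*} {f : ι → ℝ} (h : ∀ i, f i ≤ 1) : BddAbove (Set.range f) :=
  ⟨1, by rintro _ ⟨i, rfl⟩; exact h i⟩

/-- The map B ↦ B*′ is an inclusion preserving bijection between the set of
all intuitionistic fuzzy ideals of S (with unities) and the set of all intuitionistic fuzzy
ideals of the right operator semigroup R, with inverse A ↦ A*. -/
theorem stmt_9 (S Γ : Type*) [Nonempty S] [Nonempty Γ]
    (m : S → Γ → S → S) (g : Γ → S → Γ → Γ)
    (hm : ∀ (a : S) (α : Γ) (b : S) (β : Γ) (c : S), m (m a α b) β c = m a α (m b β c))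
    (hmg : ∀ (a : S) (α : Γ) (b : S) (β : Γ) (c : S), m a (g α b β) c = m (m a α b) β c)
    (hgm : ∀ (α : Γ) (a : S) (β : Γ) (b : S) (γ : Γ), g α (m a β b) γ = g (g α a β) b γ)
    (hgg : ∀ (α : Γ) (a : S) (β : Γ) (b : S) (γ : Γ), g α a (g β b γ) = g (g α a β) b γ)
    (e : S) (δ : Γ) (hlu : ∀ s, m e δ s = s) (hluΓ : ∀ γ, g γ e δ = γ)
    (γ₀ : Γ) (f : S) (hru : ∀ s, m s γ₀ f = s) (hruΓ : ∀ α, g γ₀ f α = α)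
    (R : Type*) [Mul R] (mk : Γ → S → R)
    (hsurj : ∀ u : R, ∃ (α : Γ) (a : S), u = mk α a)
    (hmkeq : ∀ (α : Γ) (a : S) (β : Γ) (b : S), mk α a = mk β b ↔
      ((∀ s : S, m s α a = m s β b) ∧ (∀ γ : Γ, g α a γ = g β b γ)))
    (hmul : ∀ (α : Γ) (a : S) (β : Γ) (b : S), mk α a * mk β b = mk (g α a β) b) :
    -- (i) B ↦ B*′ maps IFI(S) into IFI(R), and (B*′)* = B
    (∀ μ ν : S → ℝ, IFIdealGamma m μ ν →
      ∀ μ' ν' : R → ℝ,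
        (∀ (α : Γ) (a : S), μ' (mk α a) = ⨅ s : S, μ (m s α a)) →
        (∀ (α : Γ) (a : S), ν' (mk α a) = ⨆ s : S, ν (m s α a)) →
        IFIdealSG μ' ν' ∧
        (∀ a : S, (⨅ γ : Γ, μ' (mk γ a)) = μ a) ∧
        (∀ a : S, (⨆ γ : Γ, ν' (mk γ a)) = ν a)) ∧
    -- (ii) A ↦ A* maps IFI(R) into IFI(S), and (A*)*′ = A (so the map is onto)
    (∀ μ' ν' : R → ℝ, IFIdealSG μ' ν' →
      IFIdealGamma m (fun a => ⨅ γ : Γ, μ' (mk γ a)) (fun a => ⨆ γ : Γ, ν' (mk γ a)) ∧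
      (∀ (α : Γ) (a : S), (⨅ s : S, ⨅ γ : Γ, μ' (mk γ (m s α a))) = μ' (mk α a)) ∧
      (∀ (α : Γ) (a : S), (⨆ s : S, ⨆ γ : Γ, ν' (mk γ (m s α a))) = ν' (mk α a))) ∧
    -- (iii) the map is inclusion preserving
    (∀ μ₁ ν₁ μ₂ ν₂ : S → ℝ, IFIdealGamma m μ₁ ν₁ → IFIdealGamma m μ₂ ν₂ →
      (∀ x, μ₁ x ≤ μ₂ x) → (∀ x, ν₂ x ≤ ν₁ x) →
      (∀ (α : Γ) (a : S), (⨅ s : S, μ₁ (m s α a)) ≤ ⨅ s : S, μ₂ (m s α a)) ∧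
      (∀ (α : Γ) (a : S), (⨆ s : S, ν₂ (m s α a)) ≤ ⨆ s : S, ν₁ (m s α a))) := by

  refine ⟨?_, ?_, ?_⟩
  · -- Part (i)
    intro μ ν hB μ' ν' hμ' hν'
    obtain ⟨B1, B2, B3, B4, B5⟩ := hB
    have hμ1 : ∀ x, μ x ≤ 1 := fun x => by have := B3 x; have := B2 x; linarith
    have hν1 : ∀ x, ν x ≤ 1 := fun x => by have := B3 x; have := B1 x; linarith
    refine ⟨⟨?_, ?_, ?_, ?_, ?_⟩, ?_, ?_⟩
    · intro u; obtain ⟨α, a, rfl⟩ := hsurj u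
      rw [hμ']; exact le_ciInf fun s => B1 _
    · intro u; obtain ⟨α, a, rfl⟩ := hsurj u
      rw [hν']
      exact le_trans (B2 _) (le_ciSup (bddA fun s => hν1 _) (Classical.arbitrary S))
    · intro u; obtain ⟨α, a, rfl⟩ := hsurj u
      rw [hμ', hν']
      have h1 : (⨆ s : S, ν (m s α a)) ≤ 1 - ⨅ s : S, μ (m s α a) := by
        refine ciSup_le fun s => ?_
        have h2 := ciInf_le (bddB (fun s => B1 (m s α a))) s
        have := B3 (m s α a); linarith
      linarith
    · intro u v
      obtain ⟨α, a, rfl⟩ := hsurj u; obtain ⟨β, b, rfl⟩ := hsurj v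
      rw [hmul]
      simp only [hμ']
      refine le_ciInf fun s => ?_
      rw [hmg]
      refine max_le ?_ ?_
      · exact ciInf_le_of_le (bddB fun t => B1 _) s
          (le_trans (le_max_left _ _) (B4 (m s α a) β b))
      · exact ciInf_le_of_le (bddB fun t => B1 _) (m s α a) le_rfl
    · intro u v
      obtain ⟨α, a, rfl⟩ := hsurj u; obtain ⟨β, b, rfl⟩ := hsurj v
      rw [hmul]
      simp only [hν']
      refine ciSup_le fun s => ?_
      rw [hmg]
      refine le_min ?_ ?_
      · exact le_trans (le_trans (B5 (m s α a) β b) (min_le_left _ _))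
          (le_ciSup (bddA fun t : S => hν1 (m t α a)) s)
      · exact le_ciSup_of_le (bddA fun t => hν1 _) (m s α a) le_rfl
    · intro a
      simp only [hμ']
      refine le_antisymm ?_ (le_ciInf fun γ => le_ciInf fun s =>
        le_trans (le_max_right _ _) (B4 s γ a))
      refine ciInf_le_of_le (bddB fun γ => le_ciInf fun s => B1 _) δ ?_
      exact ciInf_le_of_le (bddB fun s => B1 _) e (le_of_eq (by rw [hlu]))
    · intro a
      simp only [hν']
      refine le_antisymm (ciSup_le fun γ => ciSup_le fun s =>
        le_trans (B5 s γ a) (min_le_right _ _)) ?_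
      refine le_ciSup_of_le (bddA fun γ => ciSup_le fun s => hν1 _) δ ?_
      exact le_ciSup_of_le (bddA fun s => hν1 _) e (le_of_eq (by rw [hlu]))
  · -- Part (ii)
    intro μ' ν' hA
    obtain ⟨A1, A2, A3, A4, A5⟩ := hA
    have hμ1 : ∀ u, μ' u ≤ 1 := fun u => by have := A3 u; have := A2 u; linarith
    have hν1 : ∀ u, ν' u ≤ 1 := fun u => by have := A3 u; have := A1 u; linarith
    have key : ∀ (β : Γ) (x : S) (γ : Γ) (y : S), mk β (m x γ y) = mk (g β x γ) y := by
      intro β x γ y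
      rw [hmkeq]
      exact ⟨fun s => ((hmg s β x γ y).trans (hm s β x γ y)).symm, hgm β x γ y⟩
    have key2 : ∀ (β : Γ) (x : S) (γ : Γ) (y : S),
        mk β (m x γ y) = mk β x * mk γ y := fun β x γ y =>
      (key β x γ y).trans (hmul β x γ y).symm
    refine ⟨⟨?_, ?_, ?_, ?_, ?_⟩, ?_, ?_⟩
    · intro a; exact le_ciInf fun γ => A1 _
    · intro a
      exact le_trans (A2 _) (le_ciSup (bddA fun γ => hν1 _) (Classical.arbitrary Γ))
    · intro a
      have h1 : (⨆ γ : Γ, ν' (mk γ a)) ≤ 1 - ⨅ γ : Γ, μ' (mk γ a) := by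
        refine ciSup_le fun γ => ?_
        have h2 := ciInf_le (bddB fun γ => A1 (mk γ a)) γ
        have := A3 (mk γ a); linarith
      simp only; linarith
    · intro x γ y
      refine le_ciInf fun β => ?_
      rw [key2]
      refine max_le ?_ ?_
      · exact ciInf_le_of_le (bddB fun ρ => A1 _) β
          (le_trans (le_max_left _ _) (A4 _ _))
      · exact ciInf_le_of_le (bddB fun ρ => A1 _) γ
          (le_trans (le_max_right _ _) (A4 _ _))
    · intro x γ y
      refine ciSup_le fun β => ?_
      rw [key2]
      refine le_min ?_ ?_
      · exact le_ciSup_of_le (bddA fun ρ => hν1 _) β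
          (le_trans (A5 _ _) (min_le_left _ _))
      · exact le_ciSup_of_le (bddA fun ρ => hν1 _) γ
          (le_trans (A5 _ _) (min_le_right _ _))
    · intro α a
      refine le_antisymm ?_ (le_ciInf fun s => le_ciInf fun γ => by
        rw [key2]; exact le_trans (le_max_right _ _) (A4 _ _))
      refine ciInf_le_of_le (bddB fun s => le_ciInf fun γ => A1 _) f ?_
      refine ciInf_le_of_le (bddB fun γ => A1 _) γ₀ ?_
      rw [key, hruΓ]
    · intro α a
      refine le_antisymm (ciSup_le fun s => ciSup_le fun γ => by
        rw [key2]; exact le_trans (A5 _ _) (min_le_right _ _)) ?_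
      refine le_ciSup_of_le (bddA fun s => ciSup_le fun γ => hν1 _) f ?_
      refine le_ciSup_of_le (bddA fun γ => hν1 _) γ₀ ?_
      rw [key, hruΓ]
  · -- Part (iii)
    intro μ₁ ν₁ μ₂ ν₂ h1 h2 h12 h21
    obtain ⟨B1, B2, B3, B4, B5⟩ := h1
    obtain ⟨C1, C2, C3, C4, C5⟩ := h2
    have hν1 : ∀ x, ν₁ x ≤ 1 := fun x => by have := B3 x; have := B1 x; linarith
    constructor
    · intro α a
      exact le_ciInf fun s => le_trans (ciInf_le (bddB fun s => B1 _) s) (h12 _)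
    · intro α a
      exact ciSup_le fun s => le_trans (h21 _) (le_ciSup (bddA fun t : S => hν1 (m t α a)) s)
end

section
/- Let S be a Γ-semigroup with unities. The map I ↦ I*′ is an inclusion preserving bijection between the set of all (two-sided) ideals of S and the set of all ideals of its right operator semigroup R, with inverse J ↦ J*. -/
/-- An ideal of a Γ-semigroup with multiplication `m`. -/
def IdealGamma {S Γ : Type*} (m : S → Γ → S → S) (I : Set S) : Prop :=
  I.Nonempty ∧ ∀ (x : S) (γ : Γ) (s : S), x ∈ I → m s γ x ∈ I ∧ m x γ s ∈ I

/-- An ideal of a semigroup. -/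
def IdealSG {R : Type*} [Mul R] (J : Set R) : Prop :=
  J.Nonempty ∧ ∀ u v : R, u ∈ J → u * v ∈ J ∧ v * u ∈ J

/-- Let S be a Γ-semigroup with unities. The map I ↦ I*′ is an inclusion
preserving bijection between the set of all (two-sided) ideals of S and the set of all
ideals of its right operator semigroup R, with inverse J ↦ J*. -/
theorem stmt_12 (S Γ : Type*) [Nonempty S] [Nonempty Γ]
    (m : S → Γ → S → S) (g : Γ → S → Γ → Γ)
    (hm : ∀ (a : S) (α : Γ) (b : S) (β : Γ) (c : S), m (m a α b) β c = m a α (m b β c))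
    (hmg : ∀ (a : S) (α : Γ) (b : S) (β : Γ) (c : S), m a (g α b β) c = m (m a α b) β c)
    (hgm : ∀ (α : Γ) (a : S) (β : Γ) (b : S) (γ : Γ), g α (m a β b) γ = g (g α a β) b γ)
    (hgg : ∀ (α : Γ) (a : S) (β : Γ) (b : S) (γ : Γ), g α a (g β b γ) = g (g α a β) b γ)
    (e : S) (δ : Γ) (hlu : ∀ s, m e δ s = s) (hluΓ : ∀ γ, g γ e δ = γ)
    (γ₀ : Γ) (f : S) (hru : ∀ s, m s γ₀ f = s) (hruΓ : ∀ α, g γ₀ f α = α)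
    (R : Type*) [Mul R] (mk : Γ → S → R)
    (hsurj : ∀ u : R, ∃ (α : Γ) (a : S), u = mk α a)
    (hmkeq : ∀ (α : Γ) (a : S) (β : Γ) (b : S), mk α a = mk β b ↔
      ((∀ s : S, m s α a = m s β b) ∧ (∀ γ : Γ, g α a γ = g β b γ)))
    (hmul : ∀ (α : Γ) (a : S) (β : Γ) (b : S), mk α a * mk β b = mk (g α a β) b) :
    -- (i) I ↦ I*′ maps ideals of S to ideals of R and (I*′)* = I
    (∀ I : Set S, IdealGamma m I →
      IdealSG {u : R | ∃ (α : Γ) (x : S), u = mk α x ∧ ∀ s : S, m s α x ∈ I} ∧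
      {a : S | ∀ γ : Γ, mk γ a ∈
        {u : R | ∃ (α : Γ) (x : S), u = mk α x ∧ ∀ s : S, m s α x ∈ I}} = I) ∧
    -- (ii) J ↦ J* maps ideals of R to ideals of S and (J*)*′ = J (so the map is onto)
    (∀ J : Set R, IdealSG J →
      IdealGamma m {a : S | ∀ γ : Γ, mk γ a ∈ J} ∧
      {u : R | ∃ (α : Γ) (x : S), u = mk α x ∧
        ∀ s : S, m s α x ∈ {a : S | ∀ γ : Γ, mk γ a ∈ J}} = J) ∧
    -- (iii) the map is inclusion preserving
    (∀ I₁ I₂ : Set S, IdealGamma m I₁ → IdealGamma m I₂ → I₁ ⊆ I₂ →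
      {u : R | ∃ (α : Γ) (x : S), u = mk α x ∧ ∀ s : S, m s α x ∈ I₁} ⊆
      {u : R | ∃ (α : Γ) (x : S), u = mk α x ∧ ∀ s : S, m s α x ∈ I₂}) := by
  -- key lemma: mk β (m s γ x) = mk β s * mk γ x
  have key : ∀ (β : Γ) (s : S) (γ : Γ) (x : S),
      mk β (m s γ x) = mk β s * mk γ x := by
    intro β s γ x
    rw [hmul, hmkeq]
    constructor
    · intro t; rw [hmg, hm]
    · intro ε; rw [hgm]
  refine ⟨?_, ?_, ?_⟩
  · intro I hI
    obtain ⟨⟨x₀, hx₀⟩, hId⟩ := hI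
    constructor
    · constructor
      · exact ⟨mk γ₀ x₀, γ₀, x₀, rfl, fun s => (hId x₀ γ₀ s hx₀).1⟩
      · rintro u v ⟨α, x, rfl, hx⟩
        obtain ⟨β, b, rfl⟩ := hsurj v
        constructor
        · refine ⟨g α x β, b, hmul .., fun s => ?_⟩
          rw [hmg]
          exact (hId (m s α x) β b (hx s)).2
        · refine ⟨g β b α, x, hmul .., fun s => ?_⟩
          rw [hmg]
          exact hx (m s β b)
    · ext a
      simp only [Set.mem_setOf_eq]
      constructor
      · intro h
        obtain ⟨α, x, heq, hx⟩ := h δ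
        have h1 := ((hmkeq δ a α x).mp heq).1 e
        have h2 := hx e
        rwa [← h1, hlu] at h2
      · intro ha γ
        exact ⟨γ, a, rfl, fun s => (hId a γ s ha).1⟩
  · intro J hJ
    obtain ⟨⟨u₀, hu₀⟩, hJd⟩ := hJ
    constructor
    · constructor
      · obtain ⟨α, a, rfl⟩ := hsurj u₀
        refine ⟨m f α a, fun γ => ?_⟩
        rw [key]
        exact (hJd _ _ hu₀).2
      · intro x γ s hx
        constructor
        · intro β
          rw [key]
          exact (hJd _ (mk β s) (hx γ)).2
        · intro β
          rw [key]
          exact (hJd _ (mk γ s) (hx β)).1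
    · ext u
      simp only [Set.mem_setOf_eq]
      constructor
      · rintro ⟨α, x, rfl, hx⟩
        have := hx f γ₀
        rwa [key, hmul, hruΓ] at this
      · intro hu
        obtain ⟨α, x, rfl⟩ := hsurj u
        refine ⟨α, x, rfl, fun s γ => ?_⟩
        rw [key]
        exact (hJd _ (mk γ s) hu).2
  · rintro I₁ I₂ _ _ hsub u ⟨α, x, rfl, hx⟩
    exact ⟨α, x, rfl, fun s => hsub (hx s)⟩
end

section
/- Let S be a commutative Γ-semigroup and A an intuitionistic fuzzy subset of S. Then for all x ∈ S, ⟨x,A⟩*′ = (inf_{α∈Γ} ⟨[α,x], μ_A*′⟩, sup_{α∈Γ} ⟨[α,x], ν_A*′⟩). -/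
private lemma ciInf_comm_of_nonneg {S Γ : Type*} [Nonempty S] [Nonempty Γ]
    (f : S → Γ → ℝ) (hb : ∀ s γ, 0 ≤ f s γ) :
    (⨅ s, ⨅ γ, f s γ) = ⨅ γ, ⨅ s, f s γ := by
  have hB : ∀ s, BddBelow (Set.range (f s)) := fun s => ⟨0, fun v ⟨γ, h⟩ => h ▸ hb s γ⟩
  have hB' : ∀ γ, BddBelow (Set.range (fun s => f s γ)) :=
    fun γ => ⟨0, fun v ⟨s, h⟩ => h ▸ hb s γ⟩
  have h1 : BddBelow (Set.range fun s => ⨅ γ, f s γ) :=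
    ⟨0, fun v ⟨s, h⟩ => h ▸ Real.iInf_nonneg (hb s)⟩
  have h2 : BddBelow (Set.range fun γ => ⨅ s, f s γ) :=
    ⟨0, fun v ⟨γ, h⟩ => h ▸ Real.iInf_nonneg (fun s => hb s γ)⟩
  apply le_antisymm
  · exact le_ciInf fun γ => le_ciInf fun s =>
      (ciInf_le h1 s).trans (ciInf_le (hB s) γ)
  · exact le_ciInf fun s => le_ciInf fun γ =>
      (ciInf_le h2 γ).trans (ciInf_le (hB' γ) s)

private lemma ciSup_comm_of_le_one {S Γ : Type*} [Nonempty S] [Nonempty Γ]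
    (f : S → Γ → ℝ) (hb : ∀ s γ, f s γ ≤ 1) :
    (⨆ s, ⨆ γ, f s γ) = ⨆ γ, ⨆ s, f s γ := by
  have hB : ∀ s, BddAbove (Set.range (f s)) := fun s => ⟨1, fun v ⟨γ, h⟩ => h ▸ hb s γ⟩
  have hB' : ∀ γ, BddAbove (Set.range (fun s => f s γ)) :=
    fun γ => ⟨1, fun v ⟨s, h⟩ => h ▸ hb s γ⟩
  have h1 : BddAbove (Set.range fun s => ⨆ γ, f s γ) :=
    ⟨1, fun v ⟨s, h⟩ => h ▸ Real.iSup_le (hb s) one_pos.le⟩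
  have h2 : BddAbove (Set.range fun γ => ⨆ s, f s γ) :=
    ⟨1, fun v ⟨γ, h⟩ => h ▸ Real.iSup_le (fun s => hb s γ) one_pos.le⟩
  apply le_antisymm
  · exact ciSup_le fun s => ciSup_le fun γ =>
      (le_ciSup (hB' γ) s).trans (le_ciSup h2 γ)
  · exact ciSup_le fun γ => ciSup_le fun s =>
      (le_ciSup (hB s) γ).trans (le_ciSup h1 s)

/-- Let S be a commutative Γ-semigroup and A = (μ,ν) an intuitionistic fuzzy
subset of S. Then for all x ∈ S, ⟨x,A⟩*′ = (inf_{α∈Γ} ⟨[α,x], μ*′⟩, sup_{α∈Γ} ⟨[α,x], ν*′⟩);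
i.e. at any [β,y] ∈ R, inf_s inf_γ μ(xγ(sβy)) = inf_α inf_s μ(s(αxβ)y) and dually for ν. -/
theorem stmt_16 (S Γ : Type*) [Nonempty S] [Nonempty Γ]
    (m : S → Γ → S → S) (g : Γ → S → Γ → Γ)
    (hm : ∀ (a : S) (α : Γ) (b : S) (β : Γ) (c : S), m (m a α b) β c = m a α (m b β c))
    (hmg : ∀ (a : S) (α : Γ) (b : S) (β : Γ) (c : S), m a (g α b β) c = m (m a α b) β c)
    (hgm : ∀ (α : Γ) (a : S) (β : Γ) (b : S) (γ : Γ), g α (m a β b) γ = g (g α a β) b γ)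
    (hgg : ∀ (α : Γ) (a : S) (β : Γ) (b : S) (γ : Γ), g α a (g β b γ) = g (g α a β) b γ)
    (hcomm : ∀ (a : S) (γ : Γ) (b : S), m a γ b = m b γ a)
    (μ ν : S → ℝ)
    (hμ0 : ∀ x, 0 ≤ μ x) (hν0 : ∀ x, 0 ≤ ν x) (hsum : ∀ x, μ x + ν x ≤ 1) :
    ∀ (x : S) (β : Γ) (y : S),
      (⨅ s : S, ⨅ γ : Γ, μ (m x γ (m s β y))) = (⨅ α : Γ, ⨅ s : S, μ (m s (g α x β) y)) ∧
      (⨆ s : S, ⨆ γ : Γ, ν (m x γ (m s β y))) = (⨆ α : Γ, ⨆ s : S, ν (m s (g α x β) y)) := by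
  intro x β y
  have key : ∀ (s : S) (γ : Γ), m x γ (m s β y) = m s (g γ x β) y := by
    intro s γ
    rw [hmg, ← hm, hcomm x γ s]
  constructor
  · simp_rw [key]
    exact ciInf_comm_of_nonneg _ (fun s γ => hμ0 _)
  · simp_rw [key]
    have hν1 : ∀ z, ν z ≤ 1 := fun z =>
      le_trans (le_add_of_nonneg_left (hμ0 z)) (hsum z)
    exact ciSup_comm_of_le_one _ (fun s γ => hν1 _)
end

section
/- Let S be a Γ-semigroup, P an ideal of S, and M = (χ_P, χ_P^c). Then P is a prime ideal of S if and only if ⟨x,M⟩ = M for every x ∈ S with x ∉ P. -/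
/-- Let S be a Γ-semigroup, P an ideal of S and M = (χ_P, χ_P^c). Then P is
a prime ideal of S if and only if ⟨x,M⟩ = M for every x ∈ S with x ∉ P. -/
theorem stmt_19 (S Γ : Type*) [Nonempty S] [Nonempty Γ]
    (m : S → Γ → S → S)
    (hm : ∀ (a : S) (α : Γ) (b : S) (β : Γ) (c : S), m (m a α b) β c = m a α (m b β c))
    (P : Set S) (hne : P.Nonempty)
    (hIdeal : ∀ (x : S) (γ : Γ) (s : S), x ∈ P → m s γ x ∈ P ∧ m x γ s ∈ P) :
    (∀ x y : S, (∀ γ : Γ, m x γ y ∈ P) → x ∈ P ∨ y ∈ P) ↔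
    (∀ x : S, x ∉ P → ∀ y : S,
      (⨅ γ : Γ, P.indicator (fun _ => (1 : ℝ)) (m x γ y)) =
        P.indicator (fun _ => (1 : ℝ)) y ∧
      (⨆ γ : Γ, (1 - P.indicator (fun _ => (1 : ℝ)) (m x γ y))) =
        1 - P.indicator (fun _ => (1 : ℝ)) y) := by
  set I : S → ℝ := P.indicator (fun _ => (1 : ℝ)) with hI
  have hmem : ∀ z : S, z ∈ P → I z = 1 := fun z hz => Set.indicator_of_mem hz _
  have hnmem : ∀ z : S, z ∉ P → I z = 0 := fun z hz => Set.indicator_of_notMem hz _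
  have h0 : ∀ z : S, 0 ≤ I z := fun z => Set.indicator_nonneg (fun _ _ => zero_le_one) z
  constructor
  · intro hprime x hx y
    by_cases hy : y ∈ P
    · have hall : ∀ γ : Γ, I (m x γ y) = 1 := fun γ => hmem _ ((hIdeal y γ x hy).1)
      constructor
      · rw [hmem y hy]
        simp only [hall]
        exact ciInf_const
      · rw [hmem y hy]
        simp only [hall]
        simp
    · obtain ⟨γ0, hγ0⟩ : ∃ γ : Γ, m x γ y ∉ P := by
        by_contra hc
        push_neg at hc
        rcases hprime x y hc with h | h
        · exact hx h
        · exact hy h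
      rw [hnmem y hy]
      constructor
      · refine le_antisymm ?_ ?_
        · calc (⨅ γ : Γ, I (m x γ y)) ≤ I (m x γ0 y) :=
                ciInf_le ⟨0, fun r ⟨γ, hγ⟩ => hγ ▸ h0 _⟩ γ0
            _ = 0 := hnmem _ hγ0
        · exact le_ciInf fun γ => h0 _
      · refine le_antisymm ?_ ?_
        · refine ciSup_le fun γ => ?_
          have := h0 (m x γ y); linarith
        · calc (1 : ℝ) - 0 = 1 - I (m x γ0 y) := by rw [hnmem _ hγ0]
            _ ≤ ⨆ γ : Γ, (1 - I (m x γ y)) := by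
                have hbdd : BddAbove (Set.range fun γ : Γ => 1 - I (m x γ y)) :=
                  ⟨1, fun r ⟨γ, hγ⟩ => by
                    have := h0 (m x γ y); simp only [← hγ]; linarith⟩
                exact le_ciSup hbdd γ0
  · intro h x y hxy
    by_contra hc
    push_neg at hc
    obtain ⟨hx, hy⟩ := hc
    have := (h x hx y).1
    have hall : ∀ γ : Γ, I (m x γ y) = 1 := fun γ => hmem _ (hxy γ)
    rw [hnmem y hy] at this
    simp only [hall] at this
    rw [ciInf_const] at this
    exact one_ne_zero this
end
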